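/- The set of locally adjointable operators from M to N is a norm-closed linear subspace of the Banach space of all bounded A-linear maps from M to N; in particular, if F_n → F in operator norm and each F_n is locally adjointable, then F is locally adjointable. -/

import Mathlib

open scoped RightActions
open Filter

/-- Mathlib's `CStarModule` as of December 2024: a right `A`-module (action of `Aᵐᵒᵖ`)
with an `A`-valued inner product, `A`-linear on the right. -/
class RightCStarModule (A E : Type*) [NonUnitalSemiring A] [StarRing A] [Module ℂ A]
    [AddCommGroup E] [Module ℂ E] [PartialOrder A] [SMul Aᵐᵒᵖ E] [Norm A] [Norm E]
    extends Inner A E where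
  inner_add_right {x} {y} {z} : inner x (y + z) = inner x y + inner x z
  inner_self_nonneg {x} : 0 ≤ inner x x
  inner_self {x} : inner x x = 0 ↔ x = 0
  inner_op_smul_right {a : A} {x y : E} : inner x (y <• a) = inner x y * a
  inner_smul_right_complex {z : ℂ} {x} {y} : inner x (z • y) = z • inner x y
  star_inner x y : star (inner x y) = inner y x
  norm_eq_sqrt_norm_inner_self x : ‖x‖ = √‖inner x x‖

/-- `S` is an adjoint of `T` with respect to the `A`-valued inner products:
`⟪T x, y⟫ = ⟪x, S y⟫` for all `x, y`. -/
def IsAdjointPair (A : Type*) {E F : Type*} [Inner A E] [Inner A F]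
    (T : E → F) (S : F → E) : Prop :=
  ∀ (x : E) (y : F), (inner A (T x) y : A) = inner A x (S y)

/-- `T` is adjointable: it possesses an adjoint. -/
def HasAdjoint (A : Type*) {E F : Type*} [Inner A E] [Inner A F] (T : E → F) : Prop :=
  ∃ S : F → E, IsAdjointPair A T S

/-- `T` is `A`-linear: it commutes with the right `A`-action. -/
def IsALinear (A : Type*) {E F : Type*} [SMul Aᵐᵒᵖ E] [SMul Aᵐᵒᵖ F] (T : E → F) : Prop :=
  ∀ (x : E) (a : A), T (x <• a) = T x <• a

/-- A bounded operator `T : M → N` of Hilbert C*-modules is *locally adjointable* if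
`T ∘ γ` is adjointable for every adjointable (`A`-linear bounded) `γ : A → M`. -/
def LocallyAdjointable (A : Type*) [NonUnitalCStarAlgebra A] [PartialOrder A]
    [StarOrderedRing A] {M N : Type*}
    [NormedAddCommGroup M] [NormedSpace ℂ M] [SMul Aᵐᵒᵖ M] [RightCStarModule A M]
    [Inner A N] (T : M → N) : Prop :=
  ∀ γ : A →L[ℂ] M, IsALinear A ⇑γ → HasAdjoint A ⇑γ → HasAdjoint A (T ∘ ⇑γ)

variable {A : Type*} [NonUnitalCStarAlgebra A] [PartialOrder A] [StarOrderedRing A]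
variable {K N : Type*}
  [NormedAddCommGroup K] [NormedSpace ℂ K] [SMul Aᵐᵒᵖ K] [RightCStarModule A K]
  [NormedAddCommGroup N] [NormedSpace ℂ N] [SMul Aᵐᵒᵖ N] [RightCStarModule A N]

/-! A right Hilbert `A`-module is a Hilbert `Aᵐᵒᵖ`-module in Mathlib's left-handed convention,
which supplies the Cauchy–Schwarz inequality and continuity of the inner product.
Adjoints do not increase norms, so if `Tₙ → T` have adjoints `Sₙ`, the bound
`‖Sₙ y - Sₘ y‖ ≤ ‖Tₙ - Tₘ‖ * ‖y‖` makes `Sₙ y` Cauchy, and its limit is an adjoint of `T`.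
Local adjointability of `T` asks that `T ∘L γ` lie in this closed set of adjointable maps for
each `γ`, and `T ↦ T ∘L γ` is continuous. -/

open MulOpposite

instance RightCStarModule.toCStarModuleMulOpposite {A E : Type*} [NonUnitalCStarAlgebra A]
    [PartialOrder A] [AddCommGroup E] [Module ℂ E] [SMul Aᵐᵒᵖ E] [Norm E]
    [RightCStarModule A E] : CStarModule Aᵐᵒᵖ E where
  inner x y := op (inner A x y)
  inner_add_right {_ _ _} := by rw [RightCStarModule.inner_add_right, op_add]
  inner_self_nonneg := RightCStarModule.inner_self_nonneg (A := A)
  inner_self {_} := op_eq_zero_iff _ |>.trans RightCStarModule.inner_self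
  inner_op_smul_right {a _ _} :=
    (congrArg op (RightCStarModule.inner_op_smul_right (a := unop a))).trans (op_mul _ _)
  inner_smul_right_complex {_ _ _} := by rw [RightCStarModule.inner_smul_right_complex, op_smul]
  star_inner x y := by rw [← RightCStarModule.star_inner x y, op_star]
  norm_eq_sqrt_norm_inner_self x := RightCStarModule.norm_eq_sqrt_norm_inner_self (A := A) x

namespace CStarModule

section

variable {A E : Type*} [NonUnitalCStarAlgebra A] [PartialOrder A] [AddCommGroup E] [Module ℂ E]
  [SMul A E] [Norm E] [CStarModule A E]

lemma ext_inner_left {x y : E} (h : ∀ z, inner A z x = inner A z y) : x = y := by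
  rw [← sub_eq_zero, ← inner_self (A := A), inner_sub_right, h, sub_self]

protected lemma smul_add (a : A) (x y : E) : a • (x + y) = a • x + a • y :=
  ext_inner_left (A := A) fun z => by simp only [inner_add_right, inner_op_smul_right, mul_add]

lemma norm_smul_le (a : A) (x : E) : ‖a • x‖ ≤ ‖a‖ * ‖x‖ := by
  have h : ‖a • x‖ ^ 2 ≤ (‖a‖ * ‖x‖) ^ 2 := calc
    ‖a • x‖ ^ 2 = ‖a * inner A x x * star a‖ := by
      rw [norm_sq_eq A, inner_op_smul_left, inner_op_smul_right, mul_assoc]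
    _ ≤ ‖a‖ * ‖inner A x x‖ * ‖a‖ := by
      refine (norm_mul_le _ _).trans ?_
      rw [norm_star]
      gcongr
      exact norm_mul_le _ _
    _ = (‖a‖ * ‖x‖) ^ 2 := by rw [← norm_sq_eq A]; ring
  exact (pow_le_pow_iff_left₀ (CStarModule.norm_nonneg A)
    (mul_nonneg (norm_nonneg a) (CStarModule.norm_nonneg A)) two_ne_zero).mp h

end

instance continuousConstSMul {A E : Type*} [NonUnitalCStarAlgebra A] [PartialOrder A]
    [NormedAddCommGroup E] [Module ℂ E] [SMul A E] [CStarModule A E] :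
    ContinuousConstSMul A E where
  continuous_const_smul a := AddMonoidHomClass.continuous_of_bound
    (AddMonoidHom.mk' (a • ·) (CStarModule.smul_add a)) ‖a‖ (norm_smul_le a)

end CStarModule

namespace RightCStarModule

section

variable {A E : Type*} [NonUnitalCStarAlgebra A] [PartialOrder A] [AddCommGroup E] [Module ℂ E]
  [SMul Aᵐᵒᵖ E] [Norm E] [RightCStarModule A E]

lemma inner_add_left (x y z : E) : inner A (x + y) z = inner A x z + inner A y z :=
  congrArg unop (CStarModule.inner_add_left (A := Aᵐᵒᵖ) (x := x) (y := y) (z := z))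

lemma inner_sub_left (x y z : E) : inner A (x - y) z = inner A x z - inner A y z :=
  congrArg unop (CStarModule.inner_sub_left (A := Aᵐᵒᵖ) (x := x) (y := y) (z := z))

lemma inner_smul_left_complex (c : ℂ) (x y : E) : inner A (c • x) y = star c • inner A x y :=
  congrArg unop (CStarModule.inner_smul_left_complex (A := Aᵐᵒᵖ) (z := c) (x := x) (y := y))

end

lemma norm_inner_le {E : Type*} [AddCommGroup E] [Module ℂ E] [SMul Aᵐᵒᵖ E] [Norm E]
    [RightCStarModule A E] (x y : E) : ‖inner A x y‖ ≤ ‖x‖ * ‖y‖ :=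
  CStarModule.norm_inner_le (A := Aᵐᵒᵖ) E

lemma continuous_inner {E : Type*} [NormedAddCommGroup E] [NormedSpace ℂ E] [SMul Aᵐᵒᵖ E]
    [RightCStarModule A E] : Continuous fun p : E × E => inner A p.1 p.2 :=
  continuous_unop.comp (CStarModule.continuous_inner (A := Aᵐᵒᵖ))

end RightCStarModule

lemma isClosed_setOf_isALinear {A E F : Type*} [NormedAddCommGroup E] [NormedSpace ℂ E]
    [SMul Aᵐᵒᵖ E] [NormedAddCommGroup F] [NormedSpace ℂ F] [SMul Aᵐᵒᵖ F]
    [ContinuousConstSMul Aᵐᵒᵖ F] : IsClosed {T : E →L[ℂ] F | IsALinear A ⇑T} := by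
  simp only [IsALinear, Set.ofPred_forall]
  exact isClosed_iInter fun x => isClosed_iInter fun a =>
    isClosed_eq (continuous_eval_const _) ((continuous_eval_const x).const_smul (op a))

section AdjointAlgebra

variable {A E F : Type*} [NonUnitalCStarAlgebra A] [PartialOrder A]
  [AddCommGroup E] [Module ℂ E] [SMul A E] [Norm E] [CStarModule A E]
  [AddCommGroup F] [Module ℂ F] [SMul Aᵐᵒᵖ F] [Norm F] [RightCStarModule A F]
  {T T' : E → F} {S S' : F → E}

namespace IsAdjointPair

lemma add (h : IsAdjointPair A T S) (h' : IsAdjointPair A T' S') :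
    IsAdjointPair A (T + T') (S + S') := fun x y => by
  simp only [Pi.add_apply, RightCStarModule.inner_add_left, CStarModule.inner_add_right, h x y,
    h' x y]

lemma sub (h : IsAdjointPair A T S) (h' : IsAdjointPair A T' S') :
    IsAdjointPair A (T - T') (S - S') := fun x y => by
  simp only [Pi.sub_apply, RightCStarModule.inner_sub_left, CStarModule.inner_sub_right, h x y,
    h' x y]

lemma smul (c : ℂ) (h : IsAdjointPair A T S) : IsAdjointPair A (c • T) (star c • S) :=
  fun x y => by
    simp only [Pi.smul_apply, RightCStarModule.inner_smul_left_complex,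
      CStarModule.inner_smul_right_complex, h x y]

end IsAdjointPair

lemma HasAdjoint.add (hT : HasAdjoint A T) (hT' : HasAdjoint A T') : HasAdjoint A (T + T') :=
  let ⟨S, h⟩ := hT
  let ⟨S', h'⟩ := hT'
  ⟨S + S', h.add h'⟩

lemma HasAdjoint.smul (c : ℂ) (hT : HasAdjoint A T) : HasAdjoint A (c • T) :=
  let ⟨S, h⟩ := hT
  ⟨star c • S, h.smul c⟩

end AdjointAlgebra

section LocallyAdjointableAlgebra

variable {M F : Type*} [NormedAddCommGroup M] [NormedSpace ℂ M] [SMul Aᵐᵒᵖ M]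
  [RightCStarModule A M] [AddCommGroup F] [Module ℂ F] [SMul Aᵐᵒᵖ F] [Norm F]
  [RightCStarModule A F] {T T' : M → F}

lemma LocallyAdjointable.add (hT : LocallyAdjointable A T) (hT' : LocallyAdjointable A T') :
    LocallyAdjointable A (T + T') :=
  fun γ hγ hγ' => (hT γ hγ hγ').add (hT' γ hγ hγ')

lemma LocallyAdjointable.smul (c : ℂ) (hT : LocallyAdjointable A T) :
    LocallyAdjointable A (c • T) :=
  fun γ hγ hγ' => (hT γ hγ hγ').smul c

end LocallyAdjointableAlgebra

section Closedness

variable {E F : Type*} [NormedAddCommGroup E] [NormedSpace ℂ E] [SMul A E] [CStarModule A E]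
  [NormedAddCommGroup F] [NormedSpace ℂ F] [SMul Aᵐᵒᵖ F] [RightCStarModule A F]

lemma IsAdjointPair.norm_apply_le_opNorm_mul {T : E →L[ℂ] F} {S : F → E}
    (h : IsAdjointPair A ⇑T S) (y : F) : ‖S y‖ ≤ ‖T‖ * ‖y‖ := by
  have key : ‖S y‖ * ‖S y‖ ≤ ‖T‖ * ‖y‖ * ‖S y‖ := calc
    ‖S y‖ * ‖S y‖ = ‖inner A (T (S y)) y‖ := by rw [← sq, CStarModule.norm_sq_eq A, h]
    _ ≤ ‖T (S y)‖ * ‖y‖ := RightCStarModule.norm_inner_le _ _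
    _ ≤ ‖T‖ * ‖S y‖ * ‖y‖ := by gcongr; exact T.le_opNorm _
    _ = ‖T‖ * ‖y‖ * ‖S y‖ := by ring
  rcases (norm_nonneg (S y)).eq_or_lt with h0 | h0
  · rw [← h0]; positivity
  · exact le_of_mul_le_mul_right key h0

lemma isClosed_setOf_hasAdjoint [CompleteSpace E] :
    IsClosed {T : E →L[ℂ] F | HasAdjoint A ⇑T} := by
  refine IsSeqClosed.isClosed fun T T₀ hT hlim => ?_
  choose S hS using hT
  have hcauchy (y : F) : CauchySeq fun n => S n y := by
    have hTc := cauchySeq_iff_tendsto_dist_atTop_0.mp hlim.cauchySeq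
    refine cauchySeq_iff_tendsto_dist_atTop_0.mpr <|
      squeeze_zero (fun _ => dist_nonneg) (fun p => ?_) (by simpa using hTc.mul_const ‖y‖)
    rw [dist_eq_norm, dist_eq_norm]
    exact IsAdjointPair.norm_apply_le_opNorm_mul (T := T p.1 - T p.2) ((hS p.1).sub (hS p.2)) y
  choose S₀ hS₀ using fun y => cauchySeq_tendsto_of_complete (hcauchy y)
  refine ⟨S₀, fun x y =>
    tendsto_nhds_unique (f := fun n => inner A (T n x) y) (l := atTop) ?_ ?_⟩
  · exact (RightCStarModule.continuous_inner.tendsto _).comp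
      (((continuous_eval_const x).tendsto T₀).comp hlim |>.prodMk_nhds tendsto_const_nhds)
  · refine Tendsto.congr (fun n => (hS n x y).symm) ?_
    exact (CStarModule.continuous_inner.tendsto _).comp
      (tendsto_const_nhds.prodMk_nhds (hS₀ y))

lemma isClosed_setOf_locallyAdjointable {M : Type*} [NormedAddCommGroup M] [NormedSpace ℂ M]
    [SMul Aᵐᵒᵖ M] [RightCStarModule A M] :
    IsClosed {T : M →L[ℂ] F | LocallyAdjointable A ⇑T} := by
  simp only [LocallyAdjointable, Set.ofPred_forall]
  exact isClosed_iInter fun γ => isClosed_iInter fun _ => isClosed_iInter fun _ =>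
    isClosed_setOf_hasAdjoint.preimage ((ContinuousLinearMap.compL ℂ A M F).flip γ).continuous

end Closedness

/-- The locally adjointable operators from `K` to `N` form a norm-closed linear subspace
of the Banach space of all bounded `A`-linear maps; in particular, a norm limit of
locally adjointable operators is locally adjointable. -/
theorem locallyAdjointable_closed_subspace :
    (∀ F G : K →L[ℂ] N, IsALinear A ⇑F → IsALinear A ⇑G →
      LocallyAdjointable A ⇑F → LocallyAdjointable A ⇑G → LocallyAdjointable A ⇑(F + G)) ∧
    (∀ (c : ℂ) (F : K →L[ℂ] N), IsALinear A ⇑F →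
      LocallyAdjointable A ⇑F → LocallyAdjointable A ⇑(c • F)) ∧
    IsClosed {F : K →L[ℂ] N | IsALinear A ⇑F ∧ LocallyAdjointable A ⇑F} ∧
    (∀ (Fn : ℕ → (K →L[ℂ] N)) (F : K →L[ℂ] N),
      (∀ n, IsALinear A ⇑(Fn n)) → (∀ n, LocallyAdjointable A ⇑(Fn n)) →
      Filter.Tendsto Fn Filter.atTop (nhds F) → LocallyAdjointable A ⇑F) :=
  ⟨fun _ _ _ _ hF hG => hF.add hG,
    fun c _ _ hF => hF.smul c,
    isClosed_setOf_isALinear.inter isClosed_setOf_locallyAdjointable,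
    fun _ _ _ hFn hlim => isClosed_setOf_locallyAdjointable.mem_of_tendsto hlim
      (Eventually.of_forall hFn)⟩
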